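/- Let σ ∈ {Y, Z} and let (G, I, O, λ) be an extended open graph with a gflow and |I| = |O|. Then (G, I, O, λ) has a σ-NF gflow if and only if σ ∈ λ(u) for every u ∈ Iᶜ ∩ Oᶜ. -/

import Mathlib

open scoped symmDiff

inductive Pauli | X | Y | Z
deriving DecidableEq

inductive MPlane | XY | XZ | YZ
deriving DecidableEq

/-- The set of Pauli operators defining a measurement plane. -/
def MPlane.paulis : MPlane → Finset Pauli
  | .XY => {.X, .Y}
  | .XZ => {.X, .Z}
  | .YZ => {.Y, .Z}

variable {V : Type} [Fintype V] [DecidableEq V]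

/-- Odd neighbourhood: vertices with an odd number of neighbours in `A`. -/
def oddNbhd (G : SimpleGraph V) [DecidableRel G.Adj] (A : Finset V) : Finset V :=
  Finset.univ.filter fun w => Odd (A.filter (G.Adj w)).card

/-- `f` is extensive w.r.t. the strict order `r`. -/
def IsExtensive (O : Finset V) (r : V → V → Prop) (f : V → Finset V) : Prop :=
  ∀ u ∉ O, ∀ v ∈ f u, v ≠ u → r u v

/-- gflow of an extended open graph `(G, I, O, lam)`. -/
def IsGflow (G : SimpleGraph V) [DecidableRel G.Adj]
    (I O : Finset V) (lam : V → MPlane) (g : V → Finset V) : Prop :=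
  (∀ u ∉ O, g u ⊆ Iᶜ) ∧
  (∃ r : V → V → Prop, IsStrictOrder V r ∧
    IsExtensive O r (fun u => g u ∪ oddNbhd G (g u))) ∧
  ∀ u ∉ O,
    (lam u = .XY → u ∈ oddNbhd G (g u) ∧ u ∉ g u) ∧
    (lam u = .XZ → u ∈ g u ∧ u ∈ oddNbhd G (g u)) ∧
    (lam u = .YZ → u ∈ g u ∧ u ∉ oddNbhd G (g u))

/-- σ-normal forms for gflows. -/
def IsNF (σ : Pauli) (G : SimpleGraph V) [DecidableRel G.Adj]
    (O : Finset V) (g : V → Finset V) : Prop :=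
  match σ with
  | .X => ∀ u ∉ O, oddNbhd G (g u) ⊆ insert u O
  | .Y => ∀ u ∉ O, (g u ∆ oddNbhd G (g u)) ⊆ insert u O
  | .Z => ∀ u ∉ O, g u ⊆ insert u O

/-!
Write `nfSet σ G A` for `Odd A`, `A ∆ Odd A`, `A` when `σ = X, Y, Z`, so that `g` is in `σ`-normal
form iff `nfSet σ G (g u) ⊆ {u} ∪ O`. It is additive for `∆` (over `𝔽₂` it is a matrix applied to
the indicator of `A`), and for a gflow `g` one has `u ∈ nfSet σ G (g u)` iff `σ ∈ λ(u)`.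

Sufficiency: going down the gflow order, `g u` is corrected by `∆`-adding, for each non-output
`v ≠ u` left in `nfSet σ G (g u)`, the already normalised set `c v`. As `σ ∈ λ(v)`, the set
`nfSet σ G (c v)` meets `Oᶜ` exactly in `v`, so each step removes `v` and nothing else, while all
sets involved stay later than `u` in the order.

Necessity: if `σ ∉ λ(u₀)` for some `u₀ ∉ I ∪ O`, the sets `c v` (`v ∉ O`) together with `{u₀}` are
linearly independent in `𝔽₂^{Iᶜ}`. A vanishing sum containing `{u₀}` would put `u₀`, which lies in
`nfSet σ G {u₀}` when `σ ≠ X`, into some `nfSet σ G (c v)`, forcing `v = u₀` and `σ ∈ λ(u₀)`; one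
without `{u₀}` cannot cancel at an order-minimal `v`. Hence `|Oᶜ| + 1 ≤ |Iᶜ|`, i.e. `|I| < |O|`.
-/

section Parity

variable {α : Type*} [DecidableEq α]

def ind (A : Finset α) : α → ZMod 2 := fun x => if x ∈ A then 1 else 0

@[simp]
theorem ind_apply_eq_one {A : Finset α} {x : α} : ind A x = 1 ↔ x ∈ A := by
  by_cases hx : x ∈ A <;> simp [ind, hx]

@[simp]
theorem ind_apply_eq_zero {A : Finset α} {x : α} : ind A x = 0 ↔ x ∉ A := by
  by_cases hx : x ∈ A <;> simp [ind, hx]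

theorem ind_symmDiff (A B : Finset α) : ind (A ∆ B) = ind A + ind B := by
  funext x
  by_cases hA : x ∈ A <;> by_cases hB : x ∈ B <;> simp [ind, Finset.mem_symmDiff, hA, hB]; decide

theorem ind_injective : Function.Injective (ind : Finset α → α → ZMod 2) := by
  intro A B h
  ext x
  rw [← ind_apply_eq_one, ← ind_apply_eq_one, h]

theorem exists_ne_mem_of_sum_ind_eq_zero {ι : Type*} [DecidableEq ι] {s : ι → Finset α}
    {T : Finset ι} (hT : ∑ i ∈ T, ind (s i) = 0) {i : ι} (hi : i ∈ T) {x : α} (hx : x ∈ s i) :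
    ∃ j ∈ T, j ≠ i ∧ x ∈ s j := by
  have hrest : ∑ j ∈ T.erase i, ind (s j) x ≠ 0 := by
    have := congr_fun hT x
    rw [Finset.sum_apply, ← Finset.add_sum_erase T _ hi, ind_apply_eq_one.mpr hx] at this
    intro h
    rw [h] at this
    exact one_ne_zero this
  obtain ⟨j, hj, hjx⟩ := Finset.exists_ne_zero_of_sum_ne_zero hrest
  exact ⟨j, Finset.mem_of_mem_erase hj, Finset.ne_of_mem_erase hj, by simpa using hjx⟩

theorem linearIndependent_zmod_two_iff {ι M : Type*} [AddCommGroup M] [Module (ZMod 2) M]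
    {v : ι → M} : LinearIndependent (ZMod 2) v ↔ ∀ T : Finset ι, ∑ i ∈ T, v i = 0 → T = ∅ := by
  classical
  rw [linearIndependent_iff']
  refine ⟨fun h T hT => ?_, fun h T a ha i hi => ?_⟩
  · by_contra hne
    obtain ⟨i, hi⟩ := Finset.nonempty_iff_ne_empty.mpr hne
    exact one_ne_zero (h T 1 (by simpa using hT) i hi)
  · have h01 : ∀ b : ZMod 2, b = 0 ∨ b = 1 := by decide
    have hsupp : T.filter (a · = 1) = ∅ := by
      refine h _ (Eq.trans ?_ ha)
      rw [Finset.sum_filter]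
      refine Finset.sum_congr rfl fun j _ => ?_
      rcases h01 (a j) with haj | haj <;> simp [haj]
    refine (h01 (a i)).resolve_right fun hai => ?_
    have : i ∈ T.filter (a · = 1) := Finset.mem_filter.mpr ⟨hi, hai⟩
    simp [hsupp] at this

theorem card_le_card_of_sum_ind_eq_zero {ι : Type*} [Fintype ι] {s : ι → Finset α}
    {S : Finset α} (hs : ∀ i, s i ⊆ S) (h : ∀ T : Finset ι, ∑ i ∈ T, ind (s i) = 0 → T = ∅) :
    Fintype.card ι ≤ S.card := by
  have hli : LinearIndependent (ZMod 2) fun i (x : S) => ind (s i) x := by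
    refine linearIndependent_zmod_two_iff.mpr fun T hT => h T (funext fun x => ?_)
    by_cases hx : x ∈ S
    · simpa using congr_fun hT ⟨x, hx⟩
    · rw [Finset.sum_apply]
      exact Finset.sum_eq_zero fun i _ => ind_apply_eq_zero.mpr fun hxi => hx (hs i hxi)
  simpa using hli.fintype_card_le_finrank

end Parity

section NormalForm

open Matrix

/-- The set that a `σ`-normal form confines to `{u} ∪ O`. -/
def nfSet (σ : Pauli) (G : SimpleGraph V) [DecidableRel G.Adj] (A : Finset V) : Finset V :=
  match σ with
  | .X => oddNbhd G A
  | .Y => A ∆ oddNbhd G A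
  | .Z => A

def nfMatrix (σ : Pauli) (G : SimpleGraph V) [DecidableRel G.Adj] : Matrix V V (ZMod 2) :=
  match σ with
  | .X => G.adjMatrix (ZMod 2)
  | .Y => 1 + G.adjMatrix (ZMod 2)
  | .Z => 1

variable {σ : Pauli} {G : SimpleGraph V} [DecidableRel G.Adj]

theorem isNF_iff {O : Finset V} {g : V → Finset V} :
    IsNF σ G O g ↔ ∀ u ∉ O, nfSet σ G (g u) ⊆ insert u O := by
  cases σ <;> rfl

theorem ind_oddNbhd (A : Finset V) : ind (oddNbhd G A) = G.adjMatrix (ZMod 2) *ᵥ ind A := by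
  funext x
  have hfilter : (G.neighborFinset x).filter (· ∈ A) = A.filter (G.Adj x) := by
    ext y; simp [and_comm]
  rw [SimpleGraph.adjMatrix_mulVec_apply]
  simp only [ind, Finset.sum_boole, hfilter]
  by_cases hodd : Odd (A.filter (G.Adj x)).card
  · simpa [oddNbhd, hodd] using (ZMod.natCast_eq_one_iff_odd.mpr hodd).symm
  · simpa [oddNbhd, hodd] using
      (ZMod.natCast_eq_zero_iff_even.mpr (Nat.not_odd_iff_even.mp hodd)).symm

theorem ind_nfSet (A : Finset V) : ind (nfSet σ G A) = nfMatrix σ G *ᵥ ind A := by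
  cases σ <;> simp [nfSet, nfMatrix, ind_oddNbhd, ind_symmDiff, Matrix.add_mulVec]

theorem nfSet_symmDiff (A B : Finset V) : nfSet σ G (A ∆ B) = nfSet σ G A ∆ nfSet σ G B :=
  ind_injective <| by simp only [ind_nfSet, ind_symmDiff, Matrix.mulVec_add]

theorem oddNbhd_symmDiff (A B : Finset V) : oddNbhd G (A ∆ B) = oddNbhd G A ∆ oddNbhd G B :=
  nfSet_symmDiff (σ := .X) A B

variable (σ) in
theorem sum_ind_nfSet_eq_zero {ι : Type*} {s : ι → Finset V} {T : Finset ι}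
    (hT : ∑ i ∈ T, ind (s i) = 0) : ∑ i ∈ T, ind (nfSet σ G (s i)) = 0 := by
  simp only [ind_nfSet, ← Matrix.mulVec_sum, hT, Matrix.mulVec_zero]

theorem nfSet_subset (A : Finset V) : nfSet σ G A ⊆ A ∪ oddNbhd G A := by
  cases σ
  · exact Finset.subset_union_right
  · exact Finset.symmDiff_subset_union
  · exact Finset.subset_union_left

theorem mem_nfSet_congr {A B : Finset V} {x : V} (hmem : x ∈ A ↔ x ∈ B)
    (hodd : x ∈ oddNbhd G A ↔ x ∈ oddNbhd G B) : x ∈ nfSet σ G A ↔ x ∈ nfSet σ G B := by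
  cases σ <;> simp only [nfSet, Finset.mem_symmDiff, hmem, hodd]

theorem mem_nfSet_singleton (hσ : σ ≠ .X) (u : V) : u ∈ nfSet σ G {u} := by
  have hu : u ∉ oddNbhd G {u} := by simp [oddNbhd, Finset.filter_singleton]
  cases σ <;> simp_all [nfSet, Finset.mem_symmDiff]

end NormalForm

section Gflow

variable {G : SimpleGraph V} [DecidableRel G.Adj] {I O : Finset V} {lam : V → MPlane}
  {g : V → Finset V} {σ : Pauli} {u v : V}

theorem MPlane.paulis_nonempty (p : MPlane) : p.paulis.Nonempty := by
  cases p <;> simp [MPlane.paulis]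

theorem IsGflow.mem_nfSet_self_iff (hg : IsGflow G I O lam g) (hu : u ∉ O) :
    u ∈ nfSet σ G (g u) ↔ σ ∈ (lam u).paulis := by
  obtain ⟨hXY, hXZ, hYZ⟩ := hg.2.2 u hu
  cases hlam : lam u <;> cases σ <;> simp_all [nfSet, MPlane.paulis, Finset.mem_symmDiff]

theorem IsGflow.lam_eq_XY_of_mem (hg : IsGflow G I O lam g) (huI : u ∈ I) (huO : u ∉ O) :
    lam u = .XY := by
  have hnot : u ∉ g u := fun h => Finset.mem_compl.mp (hg.1 u huO h) huI
  obtain ⟨-, hXZ, hYZ⟩ := hg.2.2 u huO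
  cases hlam : lam u
  · rfl
  · exact absurd (hXZ hlam).1 hnot
  · exact absurd (hYZ hlam).1 hnot

theorem IsGflow.mem_nfSet_self_of_mem_nfSet (hg : IsGflow G I O lam g)
    (hplanes : ∀ u, u ∉ I → u ∉ O → σ ∈ (lam u).paulis) {A : Finset V} (hA : A ⊆ Iᶜ)
    (hv : v ∈ nfSet σ G A) (hvO : v ∉ O) : v ∈ nfSet σ G (g v) := by
  rw [hg.mem_nfSet_self_iff hvO]
  by_cases hvI : v ∈ I
  -- inputs lie in no `g u`, so they are measured in `XY`; and `nfSet .Z A = A` avoids them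
  · rw [hg.lam_eq_XY_of_mem hvI hvO]
    cases σ
    · simp [MPlane.paulis]
    · simp [MPlane.paulis]
    · exact absurd (hA hv) (Finset.notMem_compl.mpr hvI)
  · exact hplanes v hvI hvO

variable (G I) in
/-- `A` may replace `g u` in a gflow ordered by `r`. -/
def IsCorrection (r : V → V → Prop) (g : V → Finset V) (u : V) (A : Finset V) : Prop :=
  A ⊆ Iᶜ ∧ (∀ w ∈ A ∪ oddNbhd G A, w ≠ u → r u w) ∧
    (u ∈ A ↔ u ∈ g u) ∧ (u ∈ oddNbhd G A ↔ u ∈ oddNbhd G (g u))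

variable {r : V → V → Prop}

theorem IsGflow.isCorrection_self (hg : IsGflow G I O lam g)
    (hext : IsExtensive O r fun u => g u ∪ oddNbhd G (g u)) (hu : u ∉ O) :
    IsCorrection G I r g u (g u) :=
  ⟨hg.1 u hu, hext u hu, Iff.rfl, Iff.rfl⟩

theorem IsGflow.of_isCorrection (hg : IsGflow G I O lam g) (hr : IsStrictOrder V r)
    {c : V → Finset V} (hc : ∀ u ∉ O, IsCorrection G I r g u (c u)) : IsGflow G I O lam c := by
  refine ⟨fun u hu => (hc u hu).1, ⟨r, hr, fun u hu => (hc u hu).2.1⟩, fun u hu => ?_⟩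
  obtain ⟨-, -, hmem, hodd⟩ := hc u hu
  simpa only [hmem, hodd] using hg.2.2 u hu

theorem IsCorrection.rel_of_rel [IsTrans V r] {B : Finset V} (hB : IsCorrection G I r g v B)
    (huv : r u v) : ∀ w ∈ B ∪ oddNbhd G B, r u w := fun w hw =>
  if hwv : w = v then hwv ▸ huv else _root_.trans huv (hB.2.1 w hw hwv)

theorem IsCorrection.symmDiff [Std.Irrefl r] {A B : Finset V} (hA : IsCorrection G I r g u A)
    (hBI : B ⊆ Iᶜ) (hBr : ∀ w ∈ B ∪ oddNbhd G B, r u w) : IsCorrection G I r g u (A ∆ B) := by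
  obtain ⟨hAI, hAr, hmem, hodd⟩ := hA
  have huB : u ∉ B ∪ oddNbhd G B := fun h => irrefl u (hBr u h)
  simp only [Finset.mem_union, not_or] at huB
  refine ⟨Finset.symmDiff_subset_union.trans (Finset.union_subset hAI hBI), fun w hw hwu => ?_,
    ?_, ?_⟩
  · rw [oddNbhd_symmDiff] at hw
    simp only [Finset.mem_union, Finset.mem_symmDiff] at hw
    by_cases hwB : w ∈ B ∪ oddNbhd G B
    · exact hBr w hwB
    · simp only [Finset.mem_union, not_or] at hwB
      exact hAr w (by simp only [Finset.mem_union]; tauto) hwu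
  · simp [Finset.mem_symmDiff, huB.1, hmem]
  · simp [oddNbhd_symmDiff, Finset.mem_symmDiff, huB.2, hodd]

theorem IsCorrection.exists_nfSet_subset [IsStrictOrder V r] (hg : IsGflow G I O lam g)
    (hplanes : ∀ u, u ∉ I → u ∉ O → σ ∈ (lam u).paulis)
    (hnext : ∀ v, r u v → v ∉ O → ∃ B, IsCorrection G I r g v B ∧ nfSet σ G B ⊆ insert v O)
    {A : Finset V} (hA : IsCorrection G I r g u A) :
    ∃ A', IsCorrection G I r g u A' ∧ nfSet σ G A' ⊆ insert u O := by
  suffices ∀ S : Finset V, ∀ A, IsCorrection G I r g u A → nfSet σ G A \ insert u O = S →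
      ∃ A', IsCorrection G I r g u A' ∧ nfSet σ G A' ⊆ insert u O from this _ A hA rfl
  intro S
  induction S using Finset.induction_on with
  | empty => exact fun A hA hS => ⟨A, hA, Finset.sdiff_eq_empty_iff_subset.mp hS⟩
  | insert v S hvS ih =>
    intro A hA hS
    have hv : v ∈ nfSet σ G A \ insert u O := hS ▸ Finset.mem_insert_self v S
    obtain ⟨hvA, hvuO⟩ := Finset.mem_sdiff.mp hv
    obtain ⟨hvu, hvO⟩ : v ≠ u ∧ v ∉ O := by simpa using hvuO
    have huv : r u v := hA.2.1 v (nfSet_subset A hvA) hvu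
    obtain ⟨B, hB, hBnf⟩ := hnext v huv hvO
    have hvB : v ∈ nfSet σ G B := (mem_nfSet_congr hB.2.2.1 hB.2.2.2).mpr
      (hg.mem_nfSet_self_of_mem_nfSet hplanes hA.1 hvA hvO)
    have hBv : ∀ x ∉ insert u O, x ∈ nfSet σ G B ↔ x = v := by
      intro x hx
      refine ⟨fun hxB => ?_, fun hxv => hxv ▸ hvB⟩
      have := hBnf hxB
      simp only [Finset.mem_insert, not_or] at hx this
      tauto
    refine ih (A ∆ B) (hA.symmDiff hB.1 (hB.rel_of_rel huv)) ?_
    ext x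
    rw [nfSet_symmDiff, Finset.mem_sdiff, Finset.mem_symmDiff]
    by_cases hx : x ∈ insert u O
    · simp only [hx, not_true_eq_false, and_false, false_iff]
      exact fun hxS => (Finset.mem_sdiff.mp (hS ▸ Finset.mem_insert_of_mem hxS)).2 hx
    · have hxA : x ∈ nfSet σ G A ↔ x = v ∨ x ∈ S := by
        simpa [hx] using congrArg (x ∈ ·) hS
      rw [hBv x hx, hxA]
      by_cases hxv : x = v
      · simp [hxv, hvS]
      · simp [hxv, hx]

theorem IsGflow.exists_isNF (hg : IsGflow G I O lam g)
    (hplanes : ∀ u, u ∉ I → u ∉ O → σ ∈ (lam u).paulis) :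
    ∃ c, IsGflow G I O lam c ∧ IsNF σ G O c := by
  obtain ⟨r, hr, hext⟩ := hg.2.1
  have hwf : WellFounded (Function.swap r) := Finite.wellFounded_of_trans_of_irrefl _
  have hcorr : ∀ u ∉ O, ∃ A, IsCorrection G I r g u A ∧ nfSet σ G A ⊆ insert u O := by
    intro u
    induction u using hwf.induction with
    | _ u ih =>
      exact fun hu => (hg.isCorrection_self hext hu).exists_nfSet_subset hg hplanes ih
  choose! c hc using hcorr
  exact ⟨c, hg.of_isCorrection hr fun u hu => (hc u hu).1, isNF_iff.mpr fun u hu => (hc u hu).2⟩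

end Gflow

section Necessity

variable {G : SimpleGraph V} [DecidableRel G.Adj] {I O : Finset V} {lam : V → MPlane}
  {c : V → Finset V} {σ : Pauli} {u₀ : V}

def augmentedFamily (O : Finset V) (c : V → Finset V) (u₀ : V) :
    Option {u // u ∉ O} → Finset V :=
  fun i => i.elim {u₀} fun v => c v

theorem IsGflow.eq_empty_of_sum_ind_eq_zero (hc : IsGflow G I O lam c)
    {T : Finset (Option {u // u ∉ O})} (hT : ∑ i ∈ T, ind (augmentedFamily O c u₀ i) = 0)
    (hnone : none ∉ T) : T = ∅ := by
  obtain ⟨r, hr, hext⟩ := hc.2.1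
  by_contra hne
  -- an `r`-minimal `v ∈ T` is met by `c v` (or its odd neighbourhood) but by no other `c w`
  obtain ⟨_ | v, hv, hmin⟩ := (InvImage.wf (fun i : Option {u // u ∉ O} => i.elim u₀ (↑))
    (Finite.wellFounded_of_trans_of_irrefl r)).has_min T
    (Finset.coe_nonempty.mpr (Finset.nonempty_iff_ne_empty.mpr hne))
  · exact hnone hv
  obtain ⟨τ, hτ⟩ := (lam v).paulis_nonempty
  obtain ⟨_ | w, hw, hwv, hvw⟩ := exists_ne_mem_of_sum_ind_eq_zero (sum_ind_nfSet_eq_zero τ hT) hv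
    ((hc.mem_nfSet_self_iff v.2).mpr hτ)
  · exact hnone hw
  have hvw' : v.1 ≠ w.1 := fun h => hwv (congrArg some (Subtype.ext h.symm))
  exact hmin _ hw (hext w w.2 v (nfSet_subset _ hvw) hvw')

theorem IsGflow.none_notMem_of_sum_ind_eq_zero (hc : IsGflow G I O lam c) (hnf : IsNF σ G O c)
    (hσ : σ ≠ .X) (hu₀ : u₀ ∉ O) (hσu₀ : σ ∉ (lam u₀).paulis)
    {T : Finset (Option {u // u ∉ O})} (hT : ∑ i ∈ T, ind (augmentedFamily O c u₀ i) = 0) :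
    none ∉ T := by
  intro hnone
  obtain ⟨_ | v, hv, hvne, hu₀v⟩ := exists_ne_mem_of_sum_ind_eq_zero
    (sum_ind_nfSet_eq_zero σ hT) hnone (mem_nfSet_singleton (G := G) hσ u₀)
  · exact hvne rfl
  have hvu₀ : u₀ = v := by simpa [hu₀] using isNF_iff.mp hnf v v.2 hu₀v
  exact hσu₀ ((hc.mem_nfSet_self_iff hu₀).mp (hvu₀ ▸ hu₀v))

theorem IsGflow.card_lt_card_of_notMem_paulis (hc : IsGflow G I O lam c) (hnf : IsNF σ G O c)
    (hσ : σ ≠ .X) (hu₀I : u₀ ∉ I) (hu₀O : u₀ ∉ O) (hσu₀ : σ ∉ (lam u₀).paulis) :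
    I.card < O.card := by
  have hsub : ∀ i, augmentedFamily O c u₀ i ⊆ Iᶜ := by
    rintro (_ | v)
    · simpa [augmentedFamily] using hu₀I
    · exact hc.1 v v.2
  have hle := card_le_card_of_sum_ind_eq_zero hsub fun T hT =>
    hc.eq_empty_of_sum_ind_eq_zero hT (hc.none_notMem_of_sum_ind_eq_zero hnf hσ hu₀O hσu₀ hT)
  simp only [Fintype.card_option, Fintype.card_subtype_compl, Fintype.card_coe,
    Finset.card_compl] at hle
  have := O.card_le_univ
  omega

end Necessity

/-- For σ ∈ {Y, Z} and |I| = |O|: an extended open graph with a gflow has a σ-NF gflow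
iff every non-input non-output measurement plane contains σ. -/
theorem sigmaNF_iff (σ : Pauli) (hσ : σ = .Y ∨ σ = .Z)
    (G : SimpleGraph V) [DecidableRel G.Adj]
    (I O : Finset V) (lam : V → MPlane)
    (hcard : I.card = O.card)
    (h : ∃ g : V → Finset V, IsGflow G I O lam g) :
    (∃ g : V → Finset V, IsGflow G I O lam g ∧ IsNF σ G O g) ↔
      (∀ u, u ∉ I → u ∉ O → σ ∈ (lam u).paulis) := by
  obtain ⟨g, hg⟩ := h
  refine ⟨fun ⟨c, hc, hnf⟩ u huI huO => ?_, hg.exists_isNF⟩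
  by_contra hσu
  have hσX : σ ≠ .X := by rcases hσ with rfl | rfl <;> decide
  exact (hc.card_lt_card_of_notMem_paulis hnf hσX huI huO hσu).ne hcard
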